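/- arXiv:2506.02446 — 2 statements merged into one kernel-verified Lean document; each statement's English description precedes it below -/
import Mathlib

section
/- Let q be an odd prime power, let (a,b) be a valid pair in F_q^2 with a ≠ b and a ∈ N_q, and let ω = ω[a,b]. Then: (i) ω satisfies (-1,-1,-1,1) if and only if a(1-a)(a+b)(a-b) ∈ R_q and each of a(2-a-b)(a-b), 2(1-a)(a-b), (a+b-2ab)(a-b) lies in N_q; (ii) ω satisfies (-1,-1,1,-1) if and only if (1-b)(a+b)(a-b) ∈ R_q and each of 2a(1-b)(a-b), (2-a-b)(a-b), b(a+b-2ab)(a-b) lies in N_q; (iii) ω satisfies (-1,1,1,1) if and only if each of a(2ab-a-b)(a-b), 2b(a-1)(a-b), (a+b-2)(a-b) lies in R_q and (a-1)(a+b)(a-b) ∈ N_q; (iv) ω satisfies (1,-1,1,1) if and only if each of (2ab-a-b)(a-b), b(a+b-2)(a-b), 2(b-1)(a-b) lies in R_q and b(b-1)(a+b)(a-b) ∈ N_q. -/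
open scoped Classical
open Finset

noncomputable section

variable {F : Type*} [Field F] [Fintype F]

/-- `x ∈ R_q`: `x` is a nonzero square in `F`. -/
def inR (x : F) : Prop := x ≠ 0 ∧ IsSquare x

/-- `x ∈ N_q`: `x` is a nonzero non-square in `F`. -/
def inN (x : F) : Prop := x ≠ 0 ∧ ¬ IsSquare x

/-- `(a, b)` is a valid pair: `ab ∈ R_q` and `(a-1)(b-1) ∈ R_q`. -/
def ValidPair (a b : F) : Prop := inR (a * b) ∧ inR ((a - 1) * (b - 1))

/-- The operation of the quadratic quasigroup `Q_{a,b}`: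
`x*y = x + a(y-x)` if `y - x ∈ R_q`, `x*y = x + b(y-x)` if `y - x ∈ N_q`, and `x*x = x`. -/
def qmul (a b x y : F) : F :=
  if inR (y - x) then x + a * (y - x) else x + b * (y - x)

/-- The extended quadratic character `χ` of `F_q`. -/
def chi (x : F) : ℤ := if x = 0 then 0 else if IsSquare x then 1 else -1

/-- The quadratic map `φ = φ[a,b]`: `φ(x) = ax` if `x ∈ R_q` and `φ(x) = bx` otherwise. -/
def phi (a b x : F) : F := if inR x then a * x else b * x

/-- `ω` satisfies `z = (z₀,z₁,z₂,z₃)` with `j`, where `φE` is the permutation induced by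
`φ[a,b]`: `ω(ω(j)) = j`, `χ(j) = z₀`, `χ(φ⁻¹(j)-1) = z₁`, `χ(ω(j)) = z₂`, and
`χ(φ⁻¹(ω(j))-1) = z₃`. -/
def SatisfiesWith (ω φE : Equiv.Perm F) (z : ℤ × ℤ × ℤ × ℤ) (j : F) : Prop :=
  ω (ω j) = j ∧ chi j = z.1 ∧ chi (φE.symm j - 1) = z.2.1 ∧
    chi (ω j) = z.2.2.1 ∧ chi (φE.symm (ω j) - 1) = z.2.2.2

/-- `ω` satisfies `z` if it satisfies `z` with some `j ∈ F_q`. -/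
def Satisfies (ω φE : Equiv.Perm F) (z : ℤ × ℤ × ℤ × ℤ) : Prop :=
  ∃ j : F, SatisfiesWith ω φE z j

lemma isSquare_mul_iff' {x y : F} (hx : x ≠ 0) (hy : y ≠ 0) :
    IsSquare (x * y) ↔ (IsSquare x ↔ IsSquare y) := by
  classical
  have hxy : x * y ≠ 0 := mul_ne_zero hx hy
  rw [← quadraticChar_one_iff_isSquare hx, ← quadraticChar_one_iff_isSquare hy,
    ← quadraticChar_one_iff_isSquare hxy, map_mul]
  rcases quadraticChar_dichotomy hx with h1 | h1 <;>
    rcases quadraticChar_dichotomy hy with h2 | h2 <;>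
    rw [h1, h2] <;> norm_num

lemma inN_div_iff {u v : F} (hv : v ≠ 0) : inN (u / v) ↔ inN (u * v) := by
  rcases eq_or_ne u 0 with rfl | hu
  · simp [inN]
  · have h1 : IsSquare (u / v) ↔ IsSquare (u * v) := by
      rw [div_eq_mul_inv, isSquare_mul_iff' hu (inv_ne_zero hv), isSquare_mul_iff' hu hv,
        isSquare_inv]
    unfold inN
    rw [h1]
    simp [div_ne_zero hu hv, mul_ne_zero hu hv]

lemma inR_div_iff {u v : F} (hv : v ≠ 0) : inR (u / v) ↔ inR (u * v) := by
  rcases eq_or_ne u 0 with rfl | hu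
  · simp [inR]
  · have h1 : IsSquare (u / v) ↔ IsSquare (u * v) := by
      rw [div_eq_mul_inv, isSquare_mul_iff' hu (inv_ne_zero hv), isSquare_mul_iff' hu hv,
        isSquare_inv]
    unfold inR
    rw [h1]
    simp [div_ne_zero hu hv, mul_ne_zero hu hv]

lemma chi_eq_one_iff {x : F} : chi x = 1 ↔ inR x := by
  unfold chi inR
  split_ifs with h h2
  · simp [h]
  · simp [h, h2]
  · simp [h, h2]

lemma chi_eq_neg_one_iff {x : F} : chi x = -1 ↔ inN x := by
  unfold chi inN
  split_ifs with h h2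
  · simp [h]
  · simp [h, h2]
  · simp [h, h2]

set_option maxHeartbeats 2000000 in
/-- Lemma 2.6: the sequences in `T₁` satisfied by `ω = ω[a,b]` when `a ∈ N_q`.
Here `φE` is the permutation of `F_q` given by `φ[a,b]` and `ω` is the permutation
`x ↦ 1 + φ(φ⁻¹(x) - 1)`. -/
theorem t1_satisfaction_a_nonsquare
    (hodd : Odd (Fintype.card F)) (a b : F) (hv : ValidPair a b) (hab : a ≠ b)
    (ha : inN a) (φE ω : Equiv.Perm F)
    (hφ : ∀ x : F, φE x = phi a b x)
    (hω : ∀ x : F, ω x = 1 + φE (φE.symm x - 1)) :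
    (Satisfies ω φE (-1, -1, -1, 1) ↔
      (inR (a * (1 - a) * (a + b) * (a - b)) ∧ inN (a * (2 - a - b) * (a - b)) ∧
        inN (2 * (1 - a) * (a - b)) ∧ inN ((a + b - 2 * a * b) * (a - b)))) ∧
    (Satisfies ω φE (-1, -1, 1, -1) ↔
      (inR ((1 - b) * (a + b) * (a - b)) ∧ inN (2 * a * (1 - b) * (a - b)) ∧
        inN ((2 - a - b) * (a - b)) ∧ inN (b * (a + b - 2 * a * b) * (a - b)))) ∧
    (Satisfies ω φE (-1, 1, 1, 1) ↔
      (inR (a * (2 * a * b - a - b) * (a - b)) ∧ inR (2 * b * (a - 1) * (a - b)) ∧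
        inR ((a + b - 2) * (a - b)) ∧ inN ((a - 1) * (a + b) * (a - b)))) ∧
    (Satisfies ω φE (1, -1, 1, 1) ↔
      (inR ((2 * a * b - a - b) * (a - b)) ∧ inR (b * (a + b - 2) * (a - b)) ∧
        inR (2 * (b - 1) * (a - b)) ∧ inN (b * (b - 1) * (a + b) * (a - b)))) := by
  have ha0 : a ≠ 0 := fun h => hv.1.1 (by rw [h, zero_mul])
  have hb0 : b ≠ 0 := fun h => hv.1.1 (by rw [h, mul_zero])
  have habne : a - b ≠ 0 := sub_ne_zero.mpr hab
  have hbN : inN b := ⟨hb0, fun hs => ha.2 (((isSquare_mul_iff' ha0 hb0).mp hv.1.2).mpr hs)⟩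
  have hphiR : ∀ x : F, inR x → phi a b x = a * x := by
    intro x hx; unfold phi; exact if_pos hx
  have hphiN : ∀ x : F, ¬ inR x → phi a b x = b * x := by
    intro x hx; unfold phi; exact if_neg hx
  have hsymmN : ∀ x : F, inN x → φE.symm x = x / a := by
    intro x hx
    have hxa : inR (x / a) := by
      rw [inR_div_iff ha0]
      exact ⟨mul_ne_zero hx.1 ha0, (isSquare_mul_iff' hx.1 ha0).mpr (iff_of_false hx.2 ha.2)⟩
    rw [Equiv.symm_apply_eq, hφ, hphiR _ hxa]
    field_simp
  have hsymmR : ∀ x : F, inR x → φE.symm x = x / b := by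
    intro x hx
    have hxb : inN (x / b) := by
      rw [inN_div_iff hb0]
      exact ⟨mul_ne_zero hx.1 hb0, fun hs => hbN.2 (((isSquare_mul_iff' hx.1 hb0).mp hs).mp hx.2)⟩
    rw [Equiv.symm_apply_eq, hφ, hphiN _ (fun h => hxb.2 h.2)]
    field_simp
  refine ⟨?_, ?_, ?_, ?_⟩
  -- Case (i): z = (-1, -1, -1, 1)
  · constructor
    · rintro ⟨j, h1, h2, h3, h4, h5⟩
      have hjN : inN j := chi_eq_neg_one_iff.mp h2
      have hs1 : φE.symm j = j / a := hsymmN j hjN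
      rw [hs1] at h3
      have huN : inN (j / a - 1) := chi_eq_neg_one_iff.mp h3
      have hωj : ω j = 1 + b * (j / a - 1) := by
        rw [hω j, hs1, hφ, hphiN _ (fun h => huN.2 h.2)]
      have hωjN : inN (ω j) := chi_eq_neg_one_iff.mp h4
      have hs2 : φE.symm (ω j) = ω j / a := hsymmN _ hωjN
      rw [hs2] at h5
      have hvR : inR (ω j / a - 1) := chi_eq_one_iff.mp h5
      have hωω : ω (ω j) = 1 + a * (ω j / a - 1) := by
        rw [hω (ω j), hs2, hφ, hphiR _ hvR]
      have key : j = a * (2 - a - b) / (a - b) := by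
        rw [eq_div_iff habne]
        rw [hωω, hωj] at h1
        field_simp at h1
        refine mul_right_cancel₀ ha0 ?_
        linear_combination (-a) * h1
      refine ⟨?_, ?_, ?_, ?_⟩
      · have e4 : ω j = (a + b - 2 * a * b) / (a - b) := by
          rw [hωj, key]; field_simp; ring
        have e5 : ω j / a - 1 = (1 - a) * (a + b) / (a * (a - b)) := by
          rw [e4]; field_simp; ring
        have := (inR_div_iff (mul_ne_zero ha0 habne)).mp (e5 ▸ hvR)
        rwa [show (1 - a) * (a + b) * (a * (a - b)) = a * (1 - a) * (a + b) * (a - b) from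
          by ring] at this
      · exact (inN_div_iff habne).mp (key ▸ hjN)
      · have e3 : j / a - 1 = 2 * (1 - a) / (a - b) := by
          rw [key]; field_simp; ring
        exact (inN_div_iff habne).mp (e3 ▸ huN)
      · have e4 : ω j = (a + b - 2 * a * b) / (a - b) := by
          rw [hωj, key]; field_simp; ring
        exact (inN_div_iff habne).mp (e4 ▸ hωjN)
    · rintro ⟨c1, c2, c3, c4⟩
      set j : F := a * (2 - a - b) / (a - b) with hjdef
      have hjN : inN j := (inN_div_iff habne).mpr c2
      have hs1 : φE.symm j = j / a := hsymmN j hjN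
      have e3 : j / a - 1 = 2 * (1 - a) / (a - b) := by
        rw [hjdef]; field_simp; ring
      have huN : inN (j / a - 1) := by rw [e3]; exact (inN_div_iff habne).mpr c3
      have hωj : ω j = 1 + b * (j / a - 1) := by
        rw [hω j, hs1, hφ, hphiN _ (fun h => huN.2 h.2)]
      have e4 : ω j = (a + b - 2 * a * b) / (a - b) := by
        rw [hωj, hjdef]; field_simp; ring
      have hωjN : inN (ω j) := by rw [e4]; exact (inN_div_iff habne).mpr c4
      have hs2 : φE.symm (ω j) = ω j / a := hsymmN _ hωjN
      have e5 : ω j / a - 1 = (1 - a) * (a + b) / (a * (a - b)) := by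
        rw [e4]; field_simp; ring
      have hvR : inR (ω j / a - 1) := by
        rw [e5]
        refine (inR_div_iff (mul_ne_zero ha0 habne)).mpr ?_
        rwa [show (1 - a) * (a + b) * (a * (a - b)) = a * (1 - a) * (a + b) * (a - b) from
          by ring]
      have hωω : ω (ω j) = 1 + a * (ω j / a - 1) := by
        rw [hω (ω j), hs2, hφ, hphiR _ hvR]
      refine ⟨j, ?_, ?_, ?_, ?_, ?_⟩
      · rw [hωω, e4, hjdef]; field_simp; ring
      · exact chi_eq_neg_one_iff.mpr hjN
      · rw [hs1]; exact chi_eq_neg_one_iff.mpr huN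
      · exact chi_eq_neg_one_iff.mpr hωjN
      · rw [hs2]; exact chi_eq_one_iff.mpr hvR
  -- Case (ii): z = (-1, -1, 1, -1)
  · constructor
    · rintro ⟨j, h1, h2, h3, h4, h5⟩
      have hjN : inN j := chi_eq_neg_one_iff.mp h2
      have hs1 : φE.symm j = j / a := hsymmN j hjN
      rw [hs1] at h3
      have huN : inN (j / a - 1) := chi_eq_neg_one_iff.mp h3
      have hωj : ω j = 1 + b * (j / a - 1) := by
        rw [hω j, hs1, hφ, hphiN _ (fun h => huN.2 h.2)]
      have hωjR : inR (ω j) := chi_eq_one_iff.mp h4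
      have hs2 : φE.symm (ω j) = ω j / b := hsymmR _ hωjR
      rw [hs2] at h5
      have hvN : inN (ω j / b - 1) := chi_eq_neg_one_iff.mp h5
      have hωω : ω (ω j) = 1 + b * (ω j / b - 1) := by
        rw [hω (ω j), hs2, hφ, hphiN _ (fun h => hvN.2 h.2)]
      have key : j = 2 * a * (1 - b) / (a - b) := by
        rw [eq_div_iff habne]
        rw [hωω, hωj] at h1
        field_simp at h1
        refine mul_right_cancel₀ hb0 ?_
        linear_combination (-b) * h1
      refine ⟨?_, ?_, ?_, ?_⟩
      · have e4 : ω j = (1 - b) * (a + b) / (a - b) := by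
          rw [hωj, key]; field_simp; ring
        exact (inR_div_iff habne).mp (e4 ▸ hωjR)
      · exact (inN_div_iff habne).mp (key ▸ hjN)
      · have e3 : j / a - 1 = (2 - a - b) / (a - b) := by
          rw [key]; field_simp; ring
        exact (inN_div_iff habne).mp (e3 ▸ huN)
      · have e4 : ω j = (1 - b) * (a + b) / (a - b) := by
          rw [hωj, key]; field_simp; ring
        have e5 : ω j / b - 1 = (a + b - 2 * a * b) / (b * (a - b)) := by
          rw [e4]; field_simp; ring
        have := (inN_div_iff (mul_ne_zero hb0 habne)).mp (e5 ▸ hvN)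
        rwa [show (a + b - 2 * a * b) * (b * (a - b)) = b * (a + b - 2 * a * b) * (a - b) from
          by ring] at this
    · rintro ⟨c1, c2, c3, c4⟩
      set j : F := 2 * a * (1 - b) / (a - b) with hjdef
      have hjN : inN j := (inN_div_iff habne).mpr c2
      have hs1 : φE.symm j = j / a := hsymmN j hjN
      have e3 : j / a - 1 = (2 - a - b) / (a - b) := by
        rw [hjdef]; field_simp; ring
      have huN : inN (j / a - 1) := by rw [e3]; exact (inN_div_iff habne).mpr c3
      have hωj : ω j = 1 + b * (j / a - 1) := by
        rw [hω j, hs1, hφ, hphiN _ (fun h => huN.2 h.2)]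
      have e4 : ω j = (1 - b) * (a + b) / (a - b) := by
        rw [hωj, hjdef]; field_simp; ring
      have hωjR : inR (ω j) := by rw [e4]; exact (inR_div_iff habne).mpr c1
      have hs2 : φE.symm (ω j) = ω j / b := hsymmR _ hωjR
      have e5 : ω j / b - 1 = (a + b - 2 * a * b) / (b * (a - b)) := by
        rw [e4]; field_simp; ring
      have hvN : inN (ω j / b - 1) := by
        rw [e5]
        refine (inN_div_iff (mul_ne_zero hb0 habne)).mpr ?_
        rwa [show (a + b - 2 * a * b) * (b * (a - b)) = b * (a + b - 2 * a * b) * (a - b) from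
          by ring]
      have hωω : ω (ω j) = 1 + b * (ω j / b - 1) := by
        rw [hω (ω j), hs2, hφ, hphiN _ (fun h => hvN.2 h.2)]
      refine ⟨j, ?_, ?_, ?_, ?_, ?_⟩
      · rw [hωω, e4, hjdef]; field_simp; ring
      · exact chi_eq_neg_one_iff.mpr hjN
      · rw [hs1]; exact chi_eq_neg_one_iff.mpr huN
      · exact chi_eq_one_iff.mpr hωjR
      · rw [hs2]; exact chi_eq_neg_one_iff.mpr hvN
  -- Case (iii): z = (-1, 1, 1, 1)
  · constructor
    · rintro ⟨j, h1, h2, h3, h4, h5⟩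
      have hjN : inN j := chi_eq_neg_one_iff.mp h2
      have hs1 : φE.symm j = j / a := hsymmN j hjN
      rw [hs1] at h3
      have huR : inR (j / a - 1) := chi_eq_one_iff.mp h3
      have hωj : ω j = 1 + a * (j / a - 1) := by
        rw [hω j, hs1, hφ, hphiR _ huR]
      have hωjR : inR (ω j) := chi_eq_one_iff.mp h4
      have hs2 : φE.symm (ω j) = ω j / b := hsymmR _ hωjR
      rw [hs2] at h5
      have hvR : inR (ω j / b - 1) := chi_eq_one_iff.mp h5
      have hωω : ω (ω j) = 1 + a * (ω j / b - 1) := by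
        rw [hω (ω j), hs2, hφ, hphiR _ hvR]
      have key : j = (a - 1) * (a + b) / (a - b) := by
        rw [eq_div_iff habne]
        rw [hωω, hωj] at h1
        field_simp at h1
        linear_combination h1
      refine ⟨?_, ?_, ?_, ?_⟩
      · have e3 : j / a - 1 = (2 * a * b - a - b) / (a * (a - b)) := by
          rw [key]; field_simp; ring
        have := (inR_div_iff (mul_ne_zero ha0 habne)).mp (e3 ▸ huR)
        rwa [show (2 * a * b - a - b) * (a * (a - b)) = a * (2 * a * b - a - b) * (a - b) from
          by ring] at this
      · have e4 : ω j = 2 * b * (a - 1) / (a - b) := by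
          rw [hωj, key]; field_simp; ring
        exact (inR_div_iff habne).mp (e4 ▸ hωjR)
      · have e4 : ω j = 2 * b * (a - 1) / (a - b) := by
          rw [hωj, key]; field_simp; ring
        have e5 : ω j / b - 1 = (a + b - 2) / (a - b) := by
          rw [e4]; field_simp; ring
        exact (inR_div_iff habne).mp (e5 ▸ hvR)
      · exact (inN_div_iff habne).mp (key ▸ hjN)
    · rintro ⟨c1, c2, c3, c4⟩
      set j : F := (a - 1) * (a + b) / (a - b) with hjdef
      have hjN : inN j := (inN_div_iff habne).mpr c4
      have hs1 : φE.symm j = j / a := hsymmN j hjN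
      have e3 : j / a - 1 = (2 * a * b - a - b) / (a * (a - b)) := by
        rw [hjdef]; field_simp; ring
      have huR : inR (j / a - 1) := by
        rw [e3]
        refine (inR_div_iff (mul_ne_zero ha0 habne)).mpr ?_
        rwa [show (2 * a * b - a - b) * (a * (a - b)) = a * (2 * a * b - a - b) * (a - b) from
          by ring]
      have hωj : ω j = 1 + a * (j / a - 1) := by
        rw [hω j, hs1, hφ, hphiR _ huR]
      have e4 : ω j = 2 * b * (a - 1) / (a - b) := by
        rw [hωj, hjdef]; field_simp; ring
      have hωjR : inR (ω j) := by rw [e4]; exact (inR_div_iff habne).mpr c2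
      have hs2 : φE.symm (ω j) = ω j / b := hsymmR _ hωjR
      have e5 : ω j / b - 1 = (a + b - 2) / (a - b) := by
        rw [e4]; field_simp; ring
      have hvR : inR (ω j / b - 1) := by rw [e5]; exact (inR_div_iff habne).mpr c3
      have hωω : ω (ω j) = 1 + a * (ω j / b - 1) := by
        rw [hω (ω j), hs2, hφ, hphiR _ hvR]
      refine ⟨j, ?_, ?_, ?_, ?_, ?_⟩
      · rw [hωω, e4, hjdef]; field_simp; ring
      · exact chi_eq_neg_one_iff.mpr hjN
      · rw [hs1]; exact chi_eq_one_iff.mpr huR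
      · exact chi_eq_one_iff.mpr hωjR
      · rw [hs2]; exact chi_eq_one_iff.mpr hvR
  -- Case (iv): z = (1, -1, 1, 1)
  · constructor
    · rintro ⟨j, h1, h2, h3, h4, h5⟩
      have hjR : inR j := chi_eq_one_iff.mp h2
      have hs1 : φE.symm j = j / b := hsymmR j hjR
      rw [hs1] at h3
      have huN : inN (j / b - 1) := chi_eq_neg_one_iff.mp h3
      have hωj : ω j = 1 + b * (j / b - 1) := by
        rw [hω j, hs1, hφ, hphiN _ (fun h => huN.2 h.2)]
      have hωjR : inR (ω j) := chi_eq_one_iff.mp h4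
      have hs2 : φE.symm (ω j) = ω j / b := hsymmR _ hωjR
      rw [hs2] at h5
      have hvR : inR (ω j / b - 1) := chi_eq_one_iff.mp h5
      have hωω : ω (ω j) = 1 + a * (ω j / b - 1) := by
        rw [hω (ω j), hs2, hφ, hphiR _ hvR]
      have key : j = (2 * a * b - a - b) / (a - b) := by
        rw [eq_div_iff habne]
        rw [hωω, hωj] at h1
        field_simp at h1
        linear_combination h1
      refine ⟨?_, ?_, ?_, ?_⟩
      · exact (inR_div_iff habne).mp (key ▸ hjR)
      · have e4 : ω j = b * (a + b - 2) / (a - b) := by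
          rw [hωj, key]; field_simp; ring
        exact (inR_div_iff habne).mp (e4 ▸ hωjR)
      · have e4 : ω j = b * (a + b - 2) / (a - b) := by
          rw [hωj, key]; field_simp; ring
        have e5 : ω j / b - 1 = 2 * (b - 1) / (a - b) := by
          rw [e4]; field_simp; ring
        exact (inR_div_iff habne).mp (e5 ▸ hvR)
      · have e3 : j / b - 1 = (b - 1) * (a + b) / (b * (a - b)) := by
          rw [key]; field_simp; ring
        have := (inN_div_iff (mul_ne_zero hb0 habne)).mp (e3 ▸ huN)
        rwa [show (b - 1) * (a + b) * (b * (a - b)) = b * (b - 1) * (a + b) * (a - b) from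
          by ring] at this
    · rintro ⟨c1, c2, c3, c4⟩
      set j : F := (2 * a * b - a - b) / (a - b) with hjdef
      have hjR : inR j := (inR_div_iff habne).mpr c1
      have hs1 : φE.symm j = j / b := hsymmR j hjR
      have e3 : j / b - 1 = (b - 1) * (a + b) / (b * (a - b)) := by
        rw [hjdef]; field_simp; ring
      have huN : inN (j / b - 1) := by
        rw [e3]
        refine (inN_div_iff (mul_ne_zero hb0 habne)).mpr ?_
        rwa [show (b - 1) * (a + b) * (b * (a - b)) = b * (b - 1) * (a + b) * (a - b) from
          by ring]
      have hωj : ω j = 1 + b * (j / b - 1) := by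
        rw [hω j, hs1, hφ, hphiN _ (fun h => huN.2 h.2)]
      have e4 : ω j = b * (a + b - 2) / (a - b) := by
        rw [hωj, hjdef]; field_simp; ring
      have hωjR : inR (ω j) := by rw [e4]; exact (inR_div_iff habne).mpr c2
      have hs2 : φE.symm (ω j) = ω j / b := hsymmR _ hωjR
      have e5 : ω j / b - 1 = 2 * (b - 1) / (a - b) := by
        rw [e4]; field_simp; ring
      have hvR : inR (ω j / b - 1) := by rw [e5]; exact (inR_div_iff habne).mpr c3
      have hωω : ω (ω j) = 1 + a * (ω j / b - 1) := by
        rw [hω (ω j), hs2, hφ, hphiR _ hvR]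
      refine ⟨j, ?_, ?_, ?_, ?_, ?_⟩
      · rw [hωω, e4, hjdef]; field_simp; ring
      · exact chi_eq_one_iff.mpr hjR
      · rw [hs1]; exact chi_eq_neg_one_iff.mpr huN
      · exact chi_eq_one_iff.mpr hωjR
      · rw [hs2]; exact chi_eq_one_iff.mpr hvR
end
end

section
/- Let n ≥ 7 be a positive integer, let (Q,·) be a quasigroup of order n, and let i ∈ {1,2,3}. Then Atp_i(Q) is neither the full symmetric group on Q nor the alternating group on Q. -/
/-!
Let `(α, β, γ)` be an autotopism such that `α` fixes more than half of the `n` rows of the Latin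
square. For any two columns `u` and `v`, the entries of the fixed rows in column `u` and in column
`v` then share a symbol, which forces `β v = v` as soon as `β u = u`. Applied to the powers of the
autotopism, every power of `β` with a fixed point is trivial, so `β ^ n = 1`, and then `α ^ n = 1`.
On the other hand, for `n ≥ 7` the least `k ≥ 2` not dividing `n` is small compared with `n`, so a
`k`-cycle (times a disjoint transposition when `k` is even) is an even permutation moving fewer
than `n / 2` points whose order does not divide `n`. The projections onto the second and third
coordinates are projections onto the first for the parastrophes `(y, x) ↦ x * y` and
`(w, y) ↦ w / y`.
-/

open scoped Classical

noncomputable section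

/-- The projection of the autotopism group of a quasigroup `(Q, mul)` onto its `i`-th
coordinate, as a set of permutations of `Q`. -/
def AtpProjQ {Q : Type*} (mul : Q → Q → Q) (i : Fin 3) : Set (Equiv.Perm Q) :=
  {δ | ∃ α β γ : Equiv.Perm Q, (∀ x y : Q, mul (α x) (β y) = γ (mul x y)) ∧ δ = ![α, β, γ] i}

open Equiv Equiv.Perm Finset Function

theorem Nat.exists_two_le_not_dvd_of_seven_le {n : ℕ} (hn : 7 ≤ n) :
    ∃ k, 2 ≤ k ∧ ¬k ∣ n ∧ (Odd k ∧ 2 * k < n ∨ Even k ∧ 2 * (k + 2) < n) := by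
  rcases em' (3 ∣ n) with h3 | h3
  · exact ⟨3, by norm_num, h3, .inl ⟨by decide, by omega⟩⟩
  have hex : ∃ k, 2 ≤ k ∧ ¬k ∣ n :=
    ⟨n + 1, by omega, Nat.not_dvd_of_pos_of_lt (by omega) (by omega)⟩
  obtain ⟨hk2, hkn⟩ := Nat.find_spec hex
  have hmin : ∀ j, 2 ≤ j → j < Nat.find hex → j ∣ n := fun j hj hjk => by
    simpa [hj] using Nat.find_min hex hjk
  set k := Nat.find hex
  clear_value k
  refine ⟨k, hk2, hkn, ?_⟩
  obtain rfl | rfl | rfl | hk5 : k = 2 ∨ k = 3 ∨ k = 4 ∨ 5 ≤ k := by omega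
  · exact .inr ⟨even_two, by omega⟩
  · exact absurd h3 hkn
  · have := hmin 2 le_rfl (by omega)
    exact .inr ⟨by decide, by omega⟩
  -- `k - 1` and `k - 2` are coprime divisors of `n`
  obtain ⟨a, rfl⟩ : ∃ a, k = a + 5 := ⟨k - 5, by omega⟩
  have hcop : Nat.Coprime (a + 4) (a + 3) := by
    simp [show a + 4 = a + 3 + 1 by omega]
  have hle : (a + 4) * (a + 3) ≤ n :=
    Nat.le_of_dvd (by omega) (hcop.mul_dvd_of_dvd_of_dvd (hmin _ (by omega) (by omega))
      (hmin _ (by omega) (by omega)))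
  rcases Nat.even_or_odd (a + 5) with heven | hodd
  · have : 1 ≤ a := by rcases heven with ⟨b, hb⟩; omega
    exact .inr ⟨heven, by nlinarith⟩
  · exact .inl ⟨hodd, by nlinarith⟩

theorem Nat.exists_even_cycleType_lcm_not_dvd {n : ℕ} (hn : 7 ≤ n) :
    ∃ m : Multiset ℕ, (∀ a ∈ m, 2 ≤ a) ∧ Even (m.sum + Multiset.card m) ∧ 2 * m.sum < n ∧
      ¬m.lcm ∣ n := by
  obtain ⟨k, hk2, hkn, ⟨hodd, hlt⟩ | ⟨heven, hlt⟩⟩ := Nat.exists_two_le_not_dvd_of_seven_le hn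
  · exact ⟨{k}, by simpa, by simpa [Nat.even_add_one], by simpa, by simpa⟩
  · refine ⟨{2, k}, by simp [hk2], by simpa [Nat.even_add], by simp; omega, ?_⟩
    simpa [lcm_eq_nat_lcm, Nat.lcm_eq_right (even_iff_two_dvd.1 heven)]

theorem exists_mem_alternatingGroup_orderOf_not_dvd_card {Q : Type*} [Fintype Q] [DecidableEq Q]
    (hn : 7 ≤ Fintype.card Q) :
    ∃ σ ∈ alternatingGroup Q, 2 * #σ.support < Fintype.card Q ∧ ¬orderOf σ ∣ Fintype.card Q := by
  obtain ⟨m, hm2, heven, hsum, hlcm⟩ := Nat.exists_even_cycleType_lcm_not_dvd hn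
  obtain ⟨σ, rfl⟩ := (exists_with_cycleType_iff Q).2 ⟨by omega, hm2⟩
  refine ⟨σ, ?_, ?_, ?_⟩
  · rw [mem_alternatingGroup, sign_of_cycleType, heven.neg_one_pow]
  · rwa [← sum_cycleType]
  · rwa [← lcm_cycleType]

theorem Equiv.Perm.orderOf_dvd_card_of_semiregular {Q : Type*} [Fintype Q] [DecidableEq Q]
    {σ : Perm Q} (h : ∀ m : ℕ, (∃ u, (σ ^ m) u = u) → σ ^ m = 1) :
    orderOf σ ∣ Fintype.card Q := by
  obtain rfl | hσ := eq_or_ne σ 1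
  · simp
  have hsupp : σ.support = univ :=
    eq_univ_of_forall fun u => mem_support.2 fun hu => hσ (by simpa using h 1 ⟨u, by simpa⟩)
  rw [← card_univ, ← hsupp, ← sum_cycleType]
  refine Multiset.dvd_sum fun k hk => orderOf_dvd_of_pow_eq_one (h k ?_)
  rw [cycleType_def, Multiset.mem_map] at hk
  obtain ⟨c, hc, rfl⟩ := hk
  obtain ⟨u, hu⟩ := (mem_cycleFactorsFinset_iff.1 hc).1.nonempty_support
  refine ⟨u, ?_⟩
  rw [← pow_mod_card_support_cycleOf_self_apply, Function.comp_apply, cycle_is_cycleOf hu hc,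
    Nat.mod_self, pow_zero, one_apply]

theorem Finset.exists_mem_mem_apply_eq_of_card_lt {α β : Type*} [Fintype β] {s : Finset α}
    {f g : α → β} (hf : Injective f) (hg : Injective g) (hs : Fintype.card β < 2 * #s) :
    ∃ x ∈ s, ∃ y ∈ s, f x = g y := by
  have : (s.image f ∩ s.image g).Nonempty := by
    refine inter_nonempty_of_card_lt_card_add_card (subset_univ _) (subset_univ _) ?_
    rw [card_univ, card_image_of_injective _ hf, card_image_of_injective _ hg]
    omega
  obtain ⟨z, hz⟩ := this
  obtain ⟨hzf, hzg⟩ := mem_inter.1 hz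
  obtain ⟨x, hx, rfl⟩ := mem_image.1 hzf
  obtain ⟨y, hy, hxy⟩ := mem_image.1 hzg
  exact ⟨x, hx, y, hy, hxy.symm⟩

def IsAutotopism {Q : Type*} (mul : Q → Q → Q) (α β γ : Perm Q) : Prop :=
  ∀ x y, mul (α x) (β y) = γ (mul x y)

namespace IsAutotopism

variable {Q : Type*} {mul : Q → Q → Q} {α β γ : Perm Q}

theorem pow (h : IsAutotopism mul α β γ) (m : ℕ) : IsAutotopism mul (α ^ m) (β ^ m) (γ ^ m) := by
  induction m with
  | zero => simp [IsAutotopism]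
  | succ m ih => intro x y; simp only [pow_succ', Perm.mul_apply, h _ _, ih x y]

theorem snd_eq_one_of_apply_eq_self [Fintype Q] [DecidableEq Q]
    (hl : ∀ u, Injective (mul u)) (hr : ∀ u, Injective fun y => mul y u)
    (h : IsAutotopism mul α β γ) (hα : 2 * #α.support < Fintype.card Q) {u : Q}
    (hu : β u = u) : β = 1 := by
  ext v
  rw [one_apply]
  have hF : Fintype.card Q < 2 * #α.supportᶜ := by rw [card_compl]; omega
  obtain ⟨x, hx, x', hx', hxx'⟩ := exists_mem_mem_apply_eq_of_card_lt (hr u) (hr v) hF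
  rw [mem_compl, Perm.notMem_support] at hx hx'
  apply hl x'
  calc mul x' (β v) = γ (mul x' v) := by rw [← h, hx']
    _ = mul x u := by rw [← hxx', ← h, hx, hu]
    _ = mul x' v := hxx'

theorem fst_eq_one_of_snd_eq_one (hl : ∀ u, Surjective (mul u))
    (hr : ∀ u, Injective fun y => mul y u) (h : IsAutotopism mul α 1 γ) {x : Q}
    (hx : α x = x) : α = 1 := by
  have hγ : ∀ w, γ w = w := fun w => by
    obtain ⟨y, rfl⟩ := hl x w
    rw [← h, hx, one_apply]
  ext z
  exact hr z (by simpa [hγ] using h z z)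

theorem orderOf_fst_dvd_card [Fintype Q] [DecidableEq Q]
    (hl : ∀ u, Injective (mul u)) (hr : ∀ u, Injective fun y => mul y u)
    (h : IsAutotopism mul α β γ) (hα : 2 * #α.support < Fintype.card Q) :
    orderOf α ∣ Fintype.card Q := by
  have hpow : ∀ m, 2 * #(α ^ m).support < Fintype.card Q := fun m =>
    lt_of_le_of_lt (Nat.mul_le_mul_left 2 (card_le_card (support_pow_le α m))) hα
  have hβ : β ^ Fintype.card Q = 1 := orderOf_dvd_iff_pow_eq_one.1 <|
    orderOf_dvd_card_of_semiregular fun m ⟨_, hu⟩ =>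
      (h.pow m).snd_eq_one_of_apply_eq_self hl hr (hpow m) hu
  obtain ⟨x, hx⟩ : α.supportᶜ.Nonempty := card_pos.1 (by rw [card_compl]; omega)
  rw [mem_compl, Perm.notMem_support] at hx
  have hn : IsAutotopism mul (α ^ Fintype.card Q) 1 (γ ^ Fintype.card Q) := hβ ▸ h.pow _
  exact orderOf_dvd_of_pow_eq_one (hn.fst_eq_one_of_snd_eq_one
    (fun u => Finite.surjective_of_injective (hl u)) hr (pow_apply_eq_self_of_apply_eq_self hx _))

end IsAutotopism

theorem not_alternatingGroup_subset_atpProjQ_zero {Q : Type*} [Fintype Q] [DecidableEq Q]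
    {mul : Q → Q → Q} (hn : 7 ≤ Fintype.card Q) (hl : ∀ u, Injective (mul u))
    (hr : ∀ u, Injective fun y => mul y u) :
    ¬(alternatingGroup Q : Set (Perm Q)) ⊆ AtpProjQ mul 0 := by
  intro hsub
  obtain ⟨σ, hσA, hσ, hnd⟩ := exists_mem_alternatingGroup_orderOf_not_dvd_card hn
  obtain ⟨α, β, γ, h, rfl⟩ := hsub hσA
  exact hnd (IsAutotopism.orderOf_fst_dvd_card hl hr h hσ)

theorem atpProjQ_one_eq {Q : Type*} (mul : Q → Q → Q) :
    AtpProjQ mul 1 = AtpProjQ (flip mul) 0 := by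
  ext δ
  constructor
  · rintro ⟨α, β, γ, h, hδ⟩
    exact ⟨β, α, γ, fun x y => h y x, hδ⟩
  · rintro ⟨β, α, γ, h, hδ⟩
    exact ⟨α, β, γ, fun x y => h y x, hδ⟩

section RightDiv

variable {Q : Type*} {mul : Q → Q → Q} (hr : ∀ u, Bijective fun y => mul y u)

def rightDiv (w y : Q) : Q :=
  (Equiv.ofBijective _ (hr y)).symm w

theorem rightDiv_eq_iff {w y x : Q} : rightDiv hr w y = x ↔ mul x y = w := by
  rw [rightDiv, Equiv.symm_apply_eq, eq_comm]
  rfl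

theorem mul_rightDiv (w y : Q) : mul (rightDiv hr w y) y = w :=
  (rightDiv_eq_iff hr).1 rfl

theorem rightDiv_left_injective (hl : ∀ u, Injective (mul u)) (w : Q) :
    Injective (rightDiv hr w) := fun y y' hyy' =>
  hl (rightDiv hr w y) <| by rw [mul_rightDiv hr, hyy', mul_rightDiv hr]

theorem rightDiv_right_injective (y : Q) : Injective fun w => rightDiv hr w y :=
  (Equiv.ofBijective _ (hr y)).symm.injective

theorem atpProjQ_two_eq : AtpProjQ mul 2 = AtpProjQ (rightDiv hr) 0 := by
  ext δ
  constructor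
  · rintro ⟨α, β, γ, h, hδ⟩
    exact ⟨γ, β, α, fun w y => (rightDiv_eq_iff hr).2 (by rw [h, mul_rightDiv hr]), hδ⟩
  · rintro ⟨γ, β, α, h, hδ⟩
    refine ⟨α, β, γ, fun x y => (rightDiv_eq_iff hr).1 ?_, hδ⟩
    simpa [(rightDiv_eq_iff hr).2 rfl] using h (mul x y) y

end RightDiv

/-- Lemma 5.3: for a quasigroup `Q` of order `n ≥ 7` and `i ∈ {1,2,3}`, the projection
`Atp_i(Q)` is neither the full symmetric group on `Q` nor the alternating group on `Q`. -/
theorem atp_proj_not_sym_not_alt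
    {Q : Type*} [Fintype Q] [DecidableEq Q] (hn : 7 ≤ Fintype.card Q)
    (mul : Q → Q → Q)
    (hleft : ∀ u : Q, Function.Bijective (mul u))
    (hright : ∀ u : Q, Function.Bijective fun y : Q => mul y u)
    (i : Fin 3) :
    AtpProjQ mul i ≠ Set.univ ∧
      AtpProjQ mul i ≠ (alternatingGroup Q : Set (Equiv.Perm Q)) := by
  suffices ¬(alternatingGroup Q : Set (Perm Q)) ⊆ AtpProjQ mul i from
    ⟨fun h => this (h ▸ Set.subset_univ _), fun h => this h.superset⟩
  have hl u := (hleft u).1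
  have hr u := (hright u).1
  match i with
  | 0 => exact not_alternatingGroup_subset_atpProjQ_zero hn hl hr
  | 1 => rw [atpProjQ_one_eq]; exact not_alternatingGroup_subset_atpProjQ_zero hn hr hl
  | 2 =>
    rw [atpProjQ_two_eq hright]
    exact not_alternatingGroup_subset_atpProjQ_zero hn (rightDiv_left_injective hright hl)
      (rightDiv_right_injective hright)
end
end
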